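/- arXiv:1910.07287 — 3 statements merged into one kernel-verified Lean document; each statement's English description precedes it below -/
import Mathlib

section
/- For p ∈ S and v ∈ T_0, the differential of exp_p at v is d exp_p(v)[u] = R_{exp_p(v)}[u] for all u ∈ T_0, where R_q[u] = q ⊙ u − ⟨q, u⟩q. -/
open Finset Real

/-- The open probability simplex in ℝ^c. -/
def simplexS (c : ℕ) : Set (Fin c → ℝ) := {p | (∀ i, 0 < p i) ∧ ∑ i, p i = 1}

/-- Tangent space: vectors with zero coordinate sum. -/
def T0 (c : ℕ) : Set (Fin c → ℝ) := {v | ∑ i, v i = 0}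

/-- Orthogonal projection onto T0. -/
noncomputable def proj0 {c : ℕ} (u : Fin c → ℝ) : Fin c → ℝ :=
  fun i => u i - (∑ j, u j) / c

/-- exp_p(v) = (p ⊙ e^v)/⟨p, e^v⟩. -/
noncomputable def expMap {c : ℕ} (p v : Fin c → ℝ) : Fin c → ℝ :=
  fun i => p i * Real.exp (v i) / ∑ j, p j * Real.exp (v j)

/-- Inverse of exp_p restricted to T0: exp_p⁻¹(q) = Π₀[log(q/p)]. -/
noncomputable def expInv {c : ℕ} (p q : Fin c → ℝ) : Fin c → ℝ :=
  proj0 (fun i => Real.log (q i / p i))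

/-- R_q[u] = q ⊙ u − ⟨q,u⟩ q. -/
def Rmap {c : ℕ} (q u : Fin c → ℝ) : Fin c → ℝ :=
  fun i => q i * u i - (∑ j, q j * u j) * q i

/-- Barycenter 𝟙ₛ = (1/c,…,1/c). -/
noncomputable def bary (c : ℕ) : Fin c → ℝ := fun _ => 1 / c

/-! With `Z(w) = ∑ⱼ pⱼ e^{wⱼ}` and `q = exp_p(v)`, the quotient rule applied to
`exp_p(w)ᵢ = pᵢ e^{wᵢ} / Z(w)` gives `∂ᵤ exp_p(v)ᵢ = qᵢ uᵢ − qᵢ ⟨q, u⟩`, since `∂ᵤ Z(v) / Z(v) = ⟨q, u⟩`. -/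

noncomputable def RmapCLM {c : ℕ} (q : Fin c → ℝ) : (Fin c → ℝ) →L[ℝ] (Fin c → ℝ) :=
  LinearMap.toContinuousLinearMap
    { toFun := Rmap q
      map_add' := fun u w => by
        ext i
        simp only [Rmap, Pi.add_apply, mul_add, sum_add_distrib]
        ring
      map_smul' := fun a u => by
        ext i
        simp only [Rmap, Pi.smul_apply, smul_eq_mul, RingHom.id_apply, mul_left_comm _ a,
          ← mul_sum]
        ring }

@[simp]
theorem RmapCLM_apply {c : ℕ} (q u : Fin c → ℝ) : RmapCLM q u = Rmap q u := rfl

theorem hasFDerivAt_sum_mul_exp {ι : Type*} [Fintype ι] (p v : ι → ℝ) :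
    HasFDerivAt (fun w : ι → ℝ => ∑ j, p j * exp (w j))
      (∑ j, (p j * exp (v j)) • (ContinuousLinearMap.proj j : (ι → ℝ) →L[ℝ] ℝ)) v := by
  refine HasFDerivAt.fun_sum fun j _ => ?_
  simpa only [smul_smul] using ((hasFDerivAt_apply j v).exp).const_mul (p j)

theorem hasFDerivAt_expMap {c : ℕ} (p v : Fin c → ℝ) (hZ : ∑ j, p j * exp (v j) ≠ 0) :
    HasFDerivAt (expMap p) (RmapCLM (expMap p v)) v := by
  refine hasFDerivAt_pi'.2 fun i => ?_
  have hinv := (hasDerivAt_inv hZ).comp_hasFDerivAt v (hasFDerivAt_sum_mul_exp p v)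
  have hnum := ((hasFDerivAt_apply i v).exp).const_mul (p i)
  refine (hnum.mul hinv).congr_fderiv ?_
  ext u
  simp only [ContinuousLinearMap.comp_apply, ContinuousLinearMap.proj_apply, RmapCLM_apply, Rmap,
    expMap, add_apply, smul_apply, _root_.sum_apply, smul_eq_mul, Function.comp_apply, div_eq_mul_inv,
    mul_right_comm _ (∑ j, p j * exp (v j))⁻¹, ← sum_mul]
  ring

theorem sum_mul_exp_pos {c : ℕ} {p : Fin c → ℝ} (hp : p ∈ simplexS c) (v : Fin c → ℝ) :
    0 < ∑ j, p j * exp (v j) :=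
  sum_pos (fun j _ => mul_pos (hp.1 j) (exp_pos _))
    (nonempty_of_sum_ne_zero (hp.2 ▸ one_ne_zero))

theorem stmt8_general {c : ℕ} (p : Fin c → ℝ) (hp : p ∈ simplexS c) (v : Fin c → ℝ) :
    ∃ f' : (Fin c → ℝ) →L[ℝ] (Fin c → ℝ),
      HasFDerivAt (fun w => expMap p w) f' v ∧
      ∀ u ∈ T0 c, f' u = Rmap (expMap p v) u :=
  ⟨RmapCLM (expMap p v), hasFDerivAt_expMap p v (sum_mul_exp_pos hp v).ne', fun _ _ => rfl⟩

theorem stmt8 {c : ℕ} (p : Fin c → ℝ) (hp : p ∈ simplexS c) (v : Fin c → ℝ) (hv : v ∈ T0 c) :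
    ∃ f' : (Fin c → ℝ) →L[ℝ] (Fin c → ℝ),
      HasFDerivAt (fun w => expMap p w) f' v ∧
      ∀ u ∈ T0 c, f' u = Rmap (expMap p v) u :=
  stmt8_general p hp v
end

section
/- For the constructed point W^p with rows W^p_j = exp_p(D_j/ρ) (p ∈ S arbitrary), every component of the similarity map satisfies S_i(W^p) = p. -/
open Finset Real

/-- The i-th component of the similarity map, in the form
S_i(W) = exp_{𝟙ₛ}( ∑_{j∈N_i} ω_{ij}(exp_{𝟙ₛ}⁻¹(W_j) − D_j/ρ) ). -/
noncomputable def Sim {n c : ℕ} (N : Fin n → Finset (Fin n)) (ω : Fin n → Fin n → ℝ)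
    (D : Fin n → Fin c → ℝ) (ρ : ℝ) (W : Fin n → Fin c → ℝ) (i : Fin n) : Fin c → ℝ :=
  expMap (bary c) (∑ j ∈ N i, ω i j • (expInv (bary c) (W j) - ρ⁻¹ • D j))

/-!
Both `exp_p` and the centring projection `Π₀` are blind to adding a constant vector. Since
`log (exp_p v) = log p + v + const`, this gives `exp_𝟙ₛ⁻¹(W^p_j) - D_j/ρ = log p + a_j 𝟙` for every
`j`; as the weights `ω_{ij}` sum to one, the argument of `exp_𝟙ₛ` in `S_i(W^p)` is `log p + a 𝟙`,
and `exp_𝟙ₛ(log p) = p` because `p` lies in the simplex.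
-/

lemma expMap_add_const {c : ℕ} (p v : Fin c → ℝ) (a : ℝ) :
    expMap p (fun k => v k + a) = expMap p v := by
  funext k
  simp only [expMap, exp_add, ← mul_assoc, ← sum_mul]
  exact mul_div_mul_right _ _ (exp_pos a).ne'

lemma proj0_add_const {c : ℕ} (u : Fin c → ℝ) (a : ℝ) :
    proj0 (fun k => u k + a) = proj0 u := by
  funext k
  have hc : (c : ℝ) ≠ 0 := by exact_mod_cast (Fin.pos k).ne'
  simp only [proj0, sum_add_distrib, sum_const, card_univ, Fintype.card_fin, nsmul_eq_mul]
  field_simp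
  ring

lemma expMap_pos {c : ℕ} {p : Fin c → ℝ} (hp : ∀ k, 0 < p k) (v : Fin c → ℝ) (k : Fin c) :
    0 < expMap p v k :=
  div_pos (mul_pos (hp k) (exp_pos _)) (sum_pos (fun j _ => mul_pos (hp j) (exp_pos _))
    ⟨k, mem_univ k⟩)

lemma log_expMap_apply {c : ℕ} {p : Fin c → ℝ} (hp : ∀ k, 0 < p k) (v : Fin c → ℝ) (k : Fin c) :
    log (expMap p v k) = log (p k) + v k - log (∑ j, p j * exp (v j)) := by
  have hZ : 0 < ∑ j, p j * exp (v j) :=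
    sum_pos (fun j _ => mul_pos (hp j) (exp_pos _)) ⟨k, mem_univ k⟩
  rw [expMap, log_div (mul_pos (hp k) (exp_pos _)).ne' hZ.ne', log_mul (hp k).ne' (exp_pos _).ne',
    log_exp]

lemma expInv_bary {c : ℕ} {q : Fin c → ℝ} (hq : ∀ k, q k ≠ 0) :
    expInv (bary c) q = proj0 (fun k => log (q k)) := by
  rw [expInv, ← proj0_add_const (fun k => log (q k)) (log c)]
  congr 1
  funext k
  have hc : (c : ℝ) ≠ 0 := by exact_mod_cast (Fin.pos k).ne'
  rw [bary, div_div_eq_mul_div, div_one, log_mul (hq k) hc]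

lemma expInv_bary_expMap_sub {c : ℕ} {p : Fin c → ℝ} (hp : ∀ k, 0 < p k) (v : Fin c → ℝ) :
    ∃ a : ℝ, expInv (bary c) (expMap p v) - v = fun k => log (p k) + a := by
  have hq : ∀ k, expMap p v k ≠ 0 := fun k => (expMap_pos hp v k).ne'
  refine ⟨-(∑ j, (log (p j) + v j)) / c, ?_⟩
  simp only [expInv_bary hq, log_expMap_apply hp, sub_eq_add_neg _ (log _),
    proj0_add_const (fun k => log (p k) + v k)]
  funext k
  simp only [Pi.sub_apply, proj0]
  ring

lemma sum_smul_add_const {ι α : Type*} (s : Finset ι) {w : ι → ℝ} (hw : ∑ j ∈ s, w j = 1)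
    (u : α → ℝ) (a : ι → ℝ) :
    ∑ j ∈ s, w j • (fun k => u k + a j) = fun k => u k + ∑ j ∈ s, w j * a j := by
  funext k
  simp only [Finset.sum_apply, Pi.smul_apply, smul_eq_mul, mul_add, sum_add_distrib, ← sum_mul, hw,
    one_mul]

lemma expMap_bary_log {c : ℕ} {p : Fin c → ℝ} (hp : p ∈ simplexS c) :
    expMap (bary c) (fun k => log (p k)) = p := by
  obtain ⟨hpos, hsum⟩ := hp
  funext k
  have hc : (c : ℝ) ≠ 0 := by exact_mod_cast (Fin.pos k).ne'
  simp only [expMap, bary, exp_log (hpos _), ← mul_sum, hsum]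
  field_simp

theorem stmt14_general {n c : ℕ} (N : Fin n → Finset (Fin n)) (ω : Fin n → Fin n → ℝ)
    (D : Fin n → Fin c → ℝ) (ρ : ℝ)
    (hωsum : ∀ i, ∑ j ∈ N i, ω i j = 1)
    (p : Fin c → ℝ) (hp : p ∈ simplexS c) (i : Fin n) :
    Sim N ω D ρ (fun j => expMap p (ρ⁻¹ • D j)) i = p := by
  choose a ha using fun j => expInv_bary_expMap_sub hp.1 (ρ⁻¹ • D j)
  rw [Sim]
  simp only [ha]
  rw [sum_smul_add_const _ (hωsum i), expMap_add_const, expMap_bary_log hp]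

theorem stmt14 {n c : ℕ} (N : Fin n → Finset (Fin n)) (ω : Fin n → Fin n → ℝ)
    (D : Fin n → Fin c → ℝ) (ρ : ℝ) (hρ : 0 < ρ)
    (hself : ∀ i, i ∈ N i)
    (hωpos : ∀ i, ∀ j ∈ N i, 0 < ω i j)
    (hωsum : ∀ i, ∑ j ∈ N i, ω i j = 1)
    (p : Fin c → ℝ) (hp : p ∈ simplexS c) (i : Fin n) :
    Sim N ω D ρ (fun j => expMap p (ρ⁻¹ • D j)) i = p :=
  stmt14_general N ω D ρ hωsum p hp i
end

section
/- If W(t) solves the assignment flow Ẇ_i = R_{W_i}[S_i(W)] with W(0) = 𝟙_W (barycenter in each row), then S̄(t) := S(W(t)) solves the S-flow S̄̇_i = R_{S̄_i}[∑_{j∈N_i} ω_{ij} S̄_j] with S̄(0) = S(𝟙_W); conversely W is recovered from Ẇ = R_W[S̄]. Hence the assignment flow is equivalent to the coupled system Ẇ = R_W[S̄], S̄̇ = R_{S̄}[Ω S̄]. -/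
open Finset Real

/-! Along the assignment flow `Ẇⱼ = R_{Wⱼ}[uⱼ]` one has `d/dt log Wⱼ = uⱼ − ⟨Wⱼ, uⱼ⟩𝟙`, so the
logarithmic coordinate `exp_𝟙ₛ⁻¹(Wⱼ)` moves with velocity `Π₀ uⱼ`: the projection `Π₀` kills the
constant. Hence the exponent of `Sᵢ(W)` moves with velocity `Π₀ ∑ⱼ ωᵢⱼ uⱼ`, and differentiating
`exp_𝟙ₛ` produces `R_{Sᵢ}` applied to it. Since `Sᵢ` has coordinate sum one, `R_{Sᵢ}` also kills
constants and the projection disappears, which for `u = S(W)` is the S-flow. -/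

section Simplex

variable {c : ℕ}

lemma pos_of_mem_simplexS {p : Fin c → ℝ} (hp : p ∈ simplexS c) : 0 < c :=
  Nat.pos_of_ne_zero (by rintro rfl; simp [simplexS] at hp)

noncomputable def proj0Linear (c : ℕ) : (Fin c → ℝ) →ₗ[ℝ] (Fin c → ℝ) where
  toFun := proj0
  map_add' u v := by
    ext i
    simp only [proj0, Pi.add_apply, sum_add_distrib]
    ring
  map_smul' a u := by
    ext i
    simp only [proj0, Pi.smul_apply, smul_eq_mul, ← mul_sum, RingHom.id_apply]
    ring

lemma proj0_sum_smul {ι : Type*} (s : Finset ι) (a : ι → ℝ) (u : ι → Fin c → ℝ) :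
    proj0 (∑ j ∈ s, a j • u j) = ∑ j ∈ s, a j • proj0 (u j) :=
  (map_sum (proj0Linear c) (fun j => a j • u j) s).trans (sum_congr rfl fun _ _ => map_smul _ _ _)

lemma proj0_sub_const (u : Fin c → ℝ) (a : ℝ) : proj0 (u - fun _ => a) = proj0 u := by
  ext i
  have hc : (c : ℝ) ≠ 0 := Nat.cast_ne_zero.2 i.pos.ne'
  simp only [proj0, Pi.sub_apply, sum_sub_distrib, sum_const, card_univ, Fintype.card_fin,
    nsmul_eq_mul]
  field_simp
  ring

lemma HasDerivAt.proj0 {f : ℝ → Fin c → ℝ} {f' : Fin c → ℝ} {t : ℝ} (hf : HasDerivAt f f' t) :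
    HasDerivAt (fun s => _root_.proj0 (f s)) (_root_.proj0 f') t :=
  (LinearMap.toContinuousLinearMap (proj0Linear c)).hasFDerivAt.comp_hasDerivAt t hf

lemma Rmap_sub_const {q : Fin c → ℝ} (hq : ∑ i, q i = 1) (u : Fin c → ℝ) (a : ℝ) :
    Rmap q (u - fun _ => a) = Rmap q u := by
  ext i
  simp only [Rmap, Pi.sub_apply, mul_sub, sum_sub_distrib, ← sum_mul, hq]
  ring

lemma Rmap_proj0 {q : Fin c → ℝ} (hq : ∑ i, q i = 1) (u : Fin c → ℝ) :
    Rmap q (proj0 u) = Rmap q u :=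
  Rmap_sub_const hq u _

lemma sum_expMap {p v : Fin c → ℝ} (hZ : ∑ j, p j * exp (v j) ≠ 0) :
    ∑ i, expMap p v i = 1 := by
  simp only [expMap, ← sum_div]
  exact div_self hZ

lemma sum_bary_mul_exp_pos (hc : 0 < c) (v : Fin c → ℝ) : 0 < ∑ j, bary c j * exp (v j) := by
  have : Nonempty (Fin c) := ⟨⟨0, hc⟩⟩
  exact sum_pos (fun j _ => by unfold bary; positivity) univ_nonempty

lemma hasDerivAt_expMap {p : Fin c → ℝ} {v : ℝ → Fin c → ℝ} {v' : Fin c → ℝ} {t : ℝ}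
    (hv : HasDerivAt v v' t) (hZ : ∑ j, p j * exp (v t j) ≠ 0) :
    HasDerivAt (fun s => expMap p (v s)) (Rmap (expMap p (v t)) v') t := by
  have hterm : ∀ k, HasDerivAt (fun s => p k * exp (v s k)) (p k * (exp (v t k) * v' k)) t :=
    fun k => ((hasDerivAt_pi.1 hv k).exp).const_mul (p k)
  refine hasDerivAt_pi.2 fun k => ?_
  refine ((hterm k).fun_div (HasDerivAt.fun_sum fun j _ => hterm j) hZ).congr_deriv ?_
  simp only [Rmap, expMap, div_mul_eq_mul_div, ← sum_div]
  field_simp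

lemma hasDerivAt_expInv {p : Fin c → ℝ} {W : ℝ → Fin c → ℝ} {u : Fin c → ℝ} {t : ℝ}
    (hp : ∀ k, p k ≠ 0) (hW : ∀ k, W t k ≠ 0) (hW' : HasDerivAt W (Rmap (W t) u) t) :
    HasDerivAt (fun s => expInv p (W s)) (proj0 u) t := by
  have hlog : HasDerivAt (fun s k => log (W s k / p k)) (u - fun _ => ∑ j, W t j * u j) t := by
    refine hasDerivAt_pi.2 fun k => ?_
    refine (((hasDerivAt_pi.1 hW' k).div_const (p k)).log
      (div_ne_zero (hW k) (hp k))).congr_deriv ?_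
    simp only [Rmap, Pi.sub_apply]
    field_simp [hW k, hp k]
  simpa only [expInv, proj0_sub_const] using hlog.proj0

end Simplex

lemma hasDerivAt_Sim {n c : ℕ} (N : Fin n → Finset (Fin n)) (ω : Fin n → Fin n → ℝ)
    (D : Fin n → Fin c → ℝ) (ρ : ℝ) {W : ℝ → Fin n → Fin c → ℝ} {u : Fin n → Fin c → ℝ}
    {t : ℝ} (hc : 0 < c) (hW : ∀ j k, W t j k ≠ 0)
    (hW' : ∀ j, HasDerivAt (fun s => W s j) (Rmap (W t j) (u j)) t) (i : Fin n) :
    HasDerivAt (fun s => Sim N ω D ρ (W s) i)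
      (Rmap (Sim N ω D ρ (W t) i) (∑ j ∈ N i, ω i j • u j)) t := by
  have hbary : ∀ k, bary c k ≠ 0 := fun k => by unfold bary; positivity
  have hv : HasDerivAt (fun s => ∑ j ∈ N i, ω i j • (expInv (bary c) (W s j) - ρ⁻¹ • D j))
      (proj0 (∑ j ∈ N i, ω i j • u j)) t := by
    rw [proj0_sum_smul]
    exact HasDerivAt.fun_sum fun j _ =>
      ((hasDerivAt_expInv hbary (hW j) (hW' j)).sub_const _).fun_const_smul _
  have hZ := sum_bary_mul_exp_pos hc
  simpa only [Sim, Rmap_proj0 (sum_expMap (hZ _).ne')] using hasDerivAt_expMap hv (hZ _).ne'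

theorem stmt15_general {n c : ℕ} (N : Fin n → Finset (Fin n)) (ω : Fin n → Fin n → ℝ)
    (D : Fin n → Fin c → ℝ) (ρ : ℝ)
    (W : ℝ → Fin n → Fin c → ℝ)
    (hWs : ∀ t j, W t j ∈ simplexS c)
    (h0 : W 0 = fun _ => bary c)
    (hflow : ∀ t i, HasDerivAt (fun s => W s i) (Rmap (W t i) (Sim N ω D ρ (W t) i)) t) :
    -- S̄(t) := S(W(t)) solves the S-flow with the stated initial condition,
    -- and W is recovered from Ẇ = R_W[S̄]:
    (∀ t i, HasDerivAt (fun s => Sim N ω D ρ (W s) i)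
        (Rmap (Sim N ω D ρ (W t) i) (∑ j ∈ N i, ω i j • Sim N ω D ρ (W t) j)) t) ∧
    (Sim N ω D ρ (W 0) = Sim N ω D ρ (fun _ => bary c)) ∧
    (∀ t i, HasDerivAt (fun s => W s i) (Rmap (W t i) (Sim N ω D ρ (W t) i)) t) := by
  refine ⟨fun t i => ?_, by rw [h0], hflow⟩
  have hc : 0 < c := pos_of_mem_simplexS (hWs t i)
  exact hasDerivAt_Sim N ω D ρ hc (fun j k => ((hWs t j).1 k).ne') (hflow t) i

theorem stmt15 {n c : ℕ} (N : Fin n → Finset (Fin n)) (ω : Fin n → Fin n → ℝ)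
    (D : Fin n → Fin c → ℝ) (ρ : ℝ) (hρ : 0 < ρ)
    (hself : ∀ i, i ∈ N i)
    (hωpos : ∀ i, ∀ j ∈ N i, 0 < ω i j)
    (hωsum : ∀ i, ∑ j ∈ N i, ω i j = 1)
    (W : ℝ → Fin n → Fin c → ℝ)
    (hWs : ∀ t j, W t j ∈ simplexS c)
    (h0 : W 0 = fun _ => bary c)
    (hflow : ∀ t i, HasDerivAt (fun s => W s i) (Rmap (W t i) (Sim N ω D ρ (W t) i)) t) :
    -- S̄(t) := S(W(t)) solves the S-flow with the stated initial condition,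
    -- and W is recovered from Ẇ = R_W[S̄]:
    (∀ t i, HasDerivAt (fun s => Sim N ω D ρ (W s) i)
        (Rmap (Sim N ω D ρ (W t) i) (∑ j ∈ N i, ω i j • Sim N ω D ρ (W t) j)) t) ∧
    (Sim N ω D ρ (W 0) = Sim N ω D ρ (fun _ => bary c)) ∧
    (∀ t i, HasDerivAt (fun s => W s i) (Rmap (W t i) (Sim N ω D ρ (W t) i)) t) :=
  stmt15_general N ω D ρ W hWs h0 hflow
end
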